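/- If Z is a weak fixed point combinator, then both δ Z and Z δ are weak fixed point combinators, where δ = λab.b(ab). -/
import Mathlib


/-- Untyped λ-terms in de Bruijn notation. -/
inductive Lam : Type
  | var : Nat → Lam
  | app : Lam → Lam → Lam
  | lam : Lam → Lam
  deriving DecidableEq

namespace Lam

/-- Lift (shift) free variables ≥ `d` by one. -/
def lift (d : Nat) : Lam → Lam
  | var n => if n < d then var n else var (n + 1)
  | app s t => app (lift d s) (lift d t)
  | lam t => lam (lift (d + 1) t)

/-- Capture-avoiding substitution of `u` for the variable with index `k`. -/
def subst (k : Nat) (u : Lam) : Lam → Lam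
  | var n => if n = k then u else if k < n then var (n - 1) else var n
  | app s t => app (subst k u s) (subst k u t)
  | lam t => lam (subst (k + 1) (lift 0 u) t)

/-- One-step β-reduction `→β` (compatible closure of the β-rule). -/
inductive Step : Lam → Lam → Prop
  | beta (t u : Lam) : Step (app (lam t) u) (subst 0 u t)
  | appL {s s' : Lam} (t : Lam) : Step s s' → Step (app s t) (app s' t)
  | appR (s : Lam) {t t' : Lam} : Step t t' → Step (app s t) (app s t')
  | lam {t t' : Lam} : Step t t' → Step (lam t) (lam t')

/-- Many-step β-reduction `↠β`. -/
def Red : Lam → Lam → Prop := Relation.ReflTransGen Step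

/-- β-convertibility `=β`. -/
def Conv : Lam → Lam → Prop := Relation.EqvGen Step

/-- `Y` is a fixed point combinator: `Y x =β x (Y x)` for a fresh variable `x`. -/
def isFPC (Y : Lam) : Prop :=
  Conv (app (lift 0 Y) (var 0)) (app (var 0) (app (lift 0 Y) (var 0)))

/-- `M P^n`: `M` applied to `n` copies of `P`. -/
def appIter (M P : Lam) : Nat → Lam
  | 0 => M
  | n + 1 => appIter (app M P) P n

/-- `I = λx.x` -/
def K_I : Lam := lam (var 0)

/-- `S = λxyz.xz(yz)` -/
def K_S : Lam := lam (lam (lam (app (app (var 2) (var 0)) (app (var 1) (var 0)))))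

/-- `B = λxyz.x(yz)` -/
def K_B : Lam := lam (lam (lam (app (var 2) (app (var 1) (var 0)))))

/-- `δ = λab.b(ab)` -/
def K_delta : Lam := lam (lam (app (var 0) (app (var 1) (var 0))))

/-- `ω_f = λx.f(xx)` (with `f` the variable bound just outside). -/
def K_omega : Lam := lam (app (var 1) (app (var 0) (var 0)))

/-- Curry's fpc `Y0 = λf.ω_f ω_f`. -/
def Y0 : Lam := lam (app K_omega K_omega)

/-- `η = λxf.f(xxf)` -/
def K_eta : Lam := lam (lam (app (var 0) (app (app (var 1) (var 1)) (var 0))))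

/-- Turing's fpc `Y1 = ηη`. -/
def Y1 : Lam := app K_eta K_eta

/-- One head reduction step: contraction of the head redex. -/
inductive Head : Lam → Lam → Prop
  | beta (t u : Lam) : Head (app (lam t) u) (subst 0 u t)
  | app {s s' : Lam} (t : Lam) : (∀ u, s ≠ lam u) → Head s s' → Head (app s t) (app s' t)
  | lam {t t' : Lam} : Head t t' → Head (lam t) (lam t')

/-- Exactly `k` head reduction steps. -/
def HeadN : Nat → Lam → Lam → Prop
  | 0, s, t => s = t
  | k + 1, s, t => ∃ u, Head s u ∧ HeadN k u t

/-- Exactly `k` β-reduction steps. -/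
def StepN : Nat → Lam → Lam → Prop
  | 0, s, t => s = t
  | k + 1, s, t => ∃ u, Step s u ∧ StepN k u t

/-- `Z` is a weak fpc: there is a sequence `Z = Z0, Z1, Z2, …` with
`Z_i x =β x (Z_{i+1} x)` for a fresh variable `x`. -/
def isWFPC (Z : Lam) : Prop :=
  ∃ f : Nat → Lam, f 0 = Z ∧
    ∀ i : Nat, Conv (app (lift 0 (f i)) (var 0)) (app (var 0) (app (lift 0 (f (i + 1))) (var 0)))

theorem lift_lift (t : Lam) : ∀ i j, i ≤ j → lift i (lift j t) = lift (j+1) (lift i t) := by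
  induction t with
  | var n =>
    intro i j h
    simp only [lift]
    split_ifs <;> simp only [lift] <;> split_ifs <;>
      first | rfl | omega | (congr 1; omega) | (exfalso; omega)
  | app s t ihs iht => intro i j h; simp only [lift, ihs _ _ h, iht _ _ h]
  | lam t iht =>
    intro i j h
    simp only [lift]
    rw [iht _ _ (by omega)]

theorem lift_subst_low (t : Lam) : ∀ i j u, i ≤ j →
    lift i (subst j u t) = subst (j+1) (lift i u) (lift i t) := by
  induction t with
  | var n =>
    intro i j u h
    simp only [lift, subst]
    split_ifs <;> simp only [lift, subst] <;> split_ifs <;>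
      first | rfl | omega | (congr 1; omega) | (exfalso; omega)
  | app s t ihs iht => intro i j u h; simp only [lift, subst, ihs _ _ _ h, iht _ _ _ h]
  | lam t iht =>
    intro i j u h
    simp only [lift, subst]
    rw [iht _ _ _ (by omega), ← lift_lift u 0 i (Nat.zero_le _)]

theorem lift_subst_high (t : Lam) : ∀ i j u, j ≤ i →
    lift i (subst j u t) = subst j (lift i u) (lift (i+1) t) := by
  induction t with
  | var n =>
    intro i j u h
    simp only [lift, subst]
    split_ifs <;> simp only [lift, subst] <;> split_ifs <;>
      first | rfl | omega | (congr 1; omega) | (exfalso; omega)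
  | app s t ihs iht => intro i j u h; simp only [lift, subst, ihs _ _ _ h, iht _ _ _ h]
  | lam t iht =>
    intro i j u h
    simp only [lift, subst]
    rw [iht _ _ _ (by omega), ← lift_lift u 0 i (Nat.zero_le _)]

theorem subst_lift (t : Lam) : ∀ i u, subst i u (lift i t) = t := by
  induction t with
  | var n =>
    intro i u
    simp only [lift, subst]
    split_ifs <;> simp only [subst] <;> split_ifs <;>
      first | rfl | omega | (congr 1; omega) | (exfalso; omega)
  | app s t ihs iht => intro i u; simp only [lift, subst, ihs, iht]
  | lam t iht => intro i u; simp only [lift, subst, iht]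

theorem subst_subst (t : Lam) : ∀ i j u v, j ≤ i →
    subst i u (subst j v t) = subst j (subst i u v) (subst (i+1) (lift j u) t) := by
  induction t with
  | var n =>
    intro i j u v h
    simp only [subst]
    split_ifs <;> (try simp only [subst]) <;> (try split_ifs) <;> (try simp only [subst]) <;>
      (try split_ifs) <;>
      first | rfl | omega | (congr 1; omega) | (exfalso; omega) | simp [subst_lift]
  | app s t ihs iht => intro i j u v h; simp only [subst, ihs _ _ _ _ h, iht _ _ _ _ h]
  | lam t iht =>
    intro i j u v h
    simp only [subst]
    rw [iht _ _ _ _ (by omega), ← lift_subst_low v 0 i u (Nat.zero_le _),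
      ← lift_lift u 0 j (Nat.zero_le _)]


theorem Step.liftStep {s t : Lam} (h : Step s t) : ∀ d, Step (lift d s) (lift d t) := by
  induction h with
  | beta t u =>
    intro d
    simp only [lift]
    rw [lift_subst_high t d 0 u (Nat.zero_le _)]
    exact Step.beta _ _
  | appL t _ ih => intro d; exact Step.appL _ (ih d)
  | appR s _ ih => intro d; exact Step.appR _ (ih d)
  | lam _ ih => intro d; exact Step.lam (ih (d+1))

theorem Step.substStep {s t : Lam} (h : Step s t) : ∀ k u, Step (subst k u s) (subst k u t) := by
  induction h with
  | beta t v =>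
    intro k u
    simp only [subst]
    rw [subst_subst t k 0 u v (Nat.zero_le _)]
    exact Step.beta _ _
  | appL t _ ih => intro k u; exact Step.appL _ (ih k u)
  | appR s _ ih => intro k u; exact Step.appR _ (ih k u)
  | lam _ ih => intro k u; exact Step.lam (ih (k+1) (lift 0 u))

theorem Conv.liftc {s t : Lam} (h : Conv s t) (d : Nat) : Conv (lift d s) (lift d t) := by
  induction h with
  | rel a b hab => exact Relation.EqvGen.rel _ _ (hab.liftStep d)
  | refl a => exact Relation.EqvGen.refl _
  | symm a b _ ih => exact Relation.EqvGen.symm _ _ ih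
  | trans a b c _ _ ih1 ih2 => exact Relation.EqvGen.trans _ _ _ ih1 ih2

theorem Conv.substc {s t : Lam} (h : Conv s t) (k : Nat) (u : Lam) :
    Conv (subst k u s) (subst k u t) := by
  induction h with
  | rel a b hab => exact Relation.EqvGen.rel _ _ (hab.substStep k u)
  | refl a => exact Relation.EqvGen.refl _
  | symm a b _ ih => exact Relation.EqvGen.symm _ _ ih
  | trans a b c _ _ ih1 ih2 => exact Relation.EqvGen.trans _ _ _ ih1 ih2

theorem Conv.appLc {s s' : Lam} (h : Conv s s') (t : Lam) : Conv (app s t) (app s' t) := by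
  induction h with
  | rel a b hab => exact Relation.EqvGen.rel _ _ (Step.appL t hab)
  | refl a => exact Relation.EqvGen.refl _
  | symm a b _ ih => exact Relation.EqvGen.symm _ _ ih
  | trans a b c _ _ ih1 ih2 => exact Relation.EqvGen.trans _ _ _ ih1 ih2

theorem key_lemma (u X : Lam) : subst 0 u (lift 1 (lift 0 X)) = lift 0 X := by
  rw [← lift_lift X 0 0 (le_refl 0), subst_lift]

theorem delta_red (A : Lam) :
    Conv (app (app K_delta A) (var 0)) (app (var 0) (app A (var 0))) := by
  have s1 : Step (app K_delta A) (lam (app (var 0) (app (lift 0 A) (var 0)))) := by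
    have h := Step.beta (lam (app (var 0) (app (var 1) (var 0)))) A
    simpa [K_delta, subst] using h
  have s2 : Step (app (lam (app (var 0) (app (lift 0 A) (var 0)))) (var 0))
      (app (var 0) (app A (var 0))) := by
    have h := Step.beta (app (var 0) (app (lift 0 A) (var 0))) (var 0)
    simpa [subst, subst_lift] using h
  exact Relation.EqvGen.trans _ _ _
    (Relation.EqvGen.rel _ _ (Step.appL _ s1)) (Relation.EqvGen.rel _ _ s2)

theorem conv_inst (X Y : Lam)
    (h : Conv (app (lift 0 X) (var 0)) (app (var 0) (app (lift 0 Y) (var 0)))) :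
    Conv (app (lift 0 X) K_delta) (app K_delta (app (lift 0 Y) K_delta)) := by
  have h1 := Conv.substc (Conv.liftc h 1) 0 K_delta
  simpa [lift, subst, key_lemma] using h1

theorem lift_delta : lift 0 K_delta = K_delta := by decide

/-- If `Z` is a weak fpc, then both `δ Z` and `Z δ` are weak fpc's. -/
theorem wfpc_delta :
    ∀ Z : Lam, isWFPC Z → isWFPC (app K_delta Z) ∧ isWFPC (app Z K_delta) := by
  intro Z hZ
  obtain ⟨f, hf0, hf⟩ := hZ
  constructor
  · refine ⟨fun n => match n with | 0 => app K_delta Z | n+1 => f n, rfl, ?_⟩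
    intro i
    cases i with
    | zero =>
      show Conv (app (lift 0 (app K_delta Z)) (var 0))
        (app (var 0) (app (lift 0 (f 0)) (var 0)))
      rw [hf0]
      show Conv (app (app (lift 0 K_delta) (lift 0 Z)) (var 0))
        (app (var 0) (app (lift 0 Z) (var 0)))
      rw [lift_delta]
      exact delta_red (lift 0 Z)
    | succ i => exact hf i
  · refine ⟨fun n => app (f n) K_delta, by show app (f 0) K_delta = app Z K_delta; rw [hf0], ?_⟩
    intro i
    have c2 := conv_inst (f i) (f (i+1)) (hf i)
    show Conv (app (app (lift 0 (f i)) (lift 0 K_delta)) (var 0))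
      (app (var 0) (app (app (lift 0 (f (i+1))) (lift 0 K_delta)) (var 0)))
    rw [lift_delta]
    exact Relation.EqvGen.trans _ _ _ (Conv.appLc c2 (var 0))
      (delta_red (app (lift 0 (f (i+1))) K_delta))

end Lam
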